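/- For every signed composition μ of n: the multiplication map T_{−μ} × 𝒟_{μ^+} → G_{r,n}, (t,d) ↦ t·d, is a bijection onto 𝓔_μ; 𝓔_μ is a complete set of right coset representatives for G_μ in G_{r,n} (each right coset G_μ g contains exactly one element of 𝓔_μ); and consequently every right coset of G_μ in G_{r,n} contains a unique element of minimal Π-length. -/

import Mathlib

/-!
Write `g = t^α w` with `α ∈ (ℤ/r)^n` and `w ∈ S_n`. Its `Π`-length is `∑ αⱼ + inv(w)`, reading
each `αⱼ` in `{0,…,r-1}`: a generator changes this quantity by at most one, and a word of that
length is explicit. `G_μ` consists of the `t^α u` with `α` supported on the positive blocks and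
`u` block-preserving, and every `g` factors as `g = h e` with `h ∈ G_μ` and `e = t^γ d`, where `γ`
vanishes on the positive blocks and `d⁻¹` is increasing on every block. For such factorisations
`ℓ(h e) ≥ ℓ(h) + ℓ(e)`: the torus parts of `h` and `e` live on disjoint positions, and the
inversions of `u` and of `d` give disjoint inversions of `u d`. A length that is superadditive in
this sense and vanishes on `G_μ` only at `1` forces each coset to contain exactly one such `e`,
and it is the unique element of minimal length; the same argument inside `S_n` identifies
`𝒟_{μ^+}`.
-/

open Equiv SemidirectProduct

namespace CycSol

/-- The action of the symmetric group on the "torus" `(ℤ/r)^n` by permuting coordinates. -/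
def act (r n : ℕ) : Equiv.Perm (Fin n) →* MulAut (Multiplicative (Fin n → ZMod r)) where
  toFun w :=
    { toFun := fun f => Multiplicative.ofAdd fun i => Multiplicative.toAdd f (w⁻¹ i)
      invFun := fun f => Multiplicative.ofAdd fun i => Multiplicative.toAdd f (w i)
      left_inv := fun f => by
        show Multiplicative.ofAdd (fun i => Multiplicative.toAdd f (w⁻¹ (w i))) = f
        simp
      right_inv := fun f => by
        show Multiplicative.ofAdd (fun i => Multiplicative.toAdd f (w (w⁻¹ i))) = f
        simp
      map_mul' := fun f g => rfl }
  map_one' := by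
    refine MulEquiv.ext fun f => ?_
    show Multiplicative.ofAdd (fun i => Multiplicative.toAdd f ((1 : Equiv.Perm (Fin n))⁻¹ i)) = f
    simp
  map_mul' := fun u v => by
    refine MulEquiv.ext fun f => ?_
    show Multiplicative.ofAdd (fun i => Multiplicative.toAdd f ((u * v)⁻¹ i)) = _
    simp [Equiv.Perm.mul_apply, mul_inv_rev]

/-- The wreath product `(ℤ/r) ≀ S_n`, i.e. the complex reflection group `G(r,1,n)`. -/
abbrev Grn (r n : ℕ) :=
  SemidirectProduct (Multiplicative (Fin n → ZMod r)) (Equiv.Perm (Fin n)) (act r n)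

/-- The generator `t_i`. -/
def tGen (r n : ℕ) (i : Fin n) : Grn r n :=
  inl (Multiplicative.ofAdd (Pi.single i 1))

/-- `sGen i j` is the transposition `(i,j)`, viewed inside `G(r,1,n)`. -/
def sGen (r n : ℕ) (i j : Fin n) : Grn r n := inr (Equiv.swap i j)

/-- `t^α` for a vector `α ∈ {0,…,r-1}^n`. -/
def tPow (r n : ℕ) (α : Fin n → Fin r) : Grn r n :=
  inl (Multiplicative.ofAdd fun i => ((α i : ℕ) : ZMod r))

/-- The generating set `Π = {t_1,…,t_n, s_1,…,s_{n-1}}`. -/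
def PiSet (r n : ℕ) : Set (Grn r n) :=
  {g | (∃ i : Fin n, g = tGen r n i) ∨
       (∃ i j : Fin n, (j : ℕ) = (i : ℕ) + 1 ∧ g = sGen r n i j)}

/-- The `Π`-length of an element of `G(r,1,n)`. -/
noncomputable def len (r n : ℕ) (g : Grn r n) : ℕ :=
  sInf {k | ∃ l : List (Grn r n), l.length = k ∧ (∀ x ∈ l, x ∈ PiSet r n) ∧ l.prod = g}

/-- A signed composition of `n`: a list of nonzero integers whose absolute values sum to `n`. -/
def IsSignedComp (n : ℕ) (μ : List ℤ) : Prop :=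
  (∀ x ∈ μ, x ≠ 0) ∧ (μ.map Int.natAbs).sum = n

/-- The type of signed compositions of `n`. -/
abbrev SComp (n : ℕ) := {l : List ℤ // IsSignedComp n l}

/-- `μ̄_i = |μ_1| + ⋯ + |μ_i|`. -/
def absPrefix (μ : List ℤ) (i : ℕ) : ℕ := ((μ.take i).map Int.natAbs).sum

/-- The subset `Π_μ ⊆ Π` attached to a signed composition `μ` (here `t_j, s_j` are indexed by
`j : Fin n`, i.e. `0`-based). -/
def PiMu (r n : ℕ) (μ : List ℤ) : Set (Grn r n) :=
  {g | (∃ j : Fin n, (∃ i, i < μ.length ∧ 0 < μ.getD i 0 ∧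
          absPrefix μ i ≤ (j : ℕ) ∧ (j : ℕ) < absPrefix μ (i + 1)) ∧ g = tGen r n j) ∨
       (∃ j k : Fin n, (k : ℕ) = (j : ℕ) + 1 ∧ (∃ i, i < μ.length ∧
          absPrefix μ i ≤ (j : ℕ) ∧ (k : ℕ) < absPrefix μ (i + 1)) ∧ g = sGen r n j k)}

/-- The reflection subgroup `G_μ = ⟨Π_μ⟩`. -/
def Gmu (r n : ℕ) (μ : List ℤ) : Subgroup (Grn r n) := Subgroup.closure (PiMu r n μ)

/-- The subgroup `T = (ℤ/r)^n` of `G(r,1,n)`. -/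
def Tsub (r n : ℕ) : Subgroup (Grn r n) :=
  (inl : Multiplicative (Fin n → ZMod r) →* Grn r n).range

/-- The subgroup `S_n` of `G(r,1,n)`. -/
def Ssub (r n : ℕ) : Subgroup (Grn r n) :=
  (inr : Equiv.Perm (Fin n) →* Grn r n).range

/-- `T_{-μ}`: the subgroup of `T` generated by those `t_i` not lying in `G_μ`. -/
def Tneg (r n : ℕ) (μ : List ℤ) : Subgroup (Grn r n) :=
  Subgroup.closure {g | ∃ i : Fin n, tGen r n i ∉ Gmu r n μ ∧ g = tGen r n i}

/-- The Young subgroup `S_{μ^+} = G_μ ∩ S_n`, as a subgroup of `S_n`. -/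
def youngS (r n : ℕ) (μ : List ℤ) : Subgroup (Equiv.Perm (Fin n)) :=
  (Gmu r n μ).comap (inr : Equiv.Perm (Fin n) →* Grn r n)

/-- `𝒟_{μ^+}`: the permutations of minimal (Coxeter = `Π`-) length in their right coset
`S_{μ^+} w`. -/
noncomputable def Dset (r n : ℕ) (μ : List ℤ) : Set (Equiv.Perm (Fin n)) :=
  {d | ∀ w : Equiv.Perm (Fin n), w * d⁻¹ ∈ youngS r n μ →
        len r n (inr d) ≤ len r n (inr w)}

/-- `𝒟_{μ^+ν^+} = 𝒟_{μ^+} ∩ 𝒟_{ν^+}^{-1}`. -/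
noncomputable def DD (r n : ℕ) (μ ν : List ℤ) : Set (Equiv.Perm (Fin n)) :=
  Dset r n μ ∩ {d | d⁻¹ ∈ Dset r n ν}

/-- `𝓔_μ`: the elements of minimal `Π`-length in their right coset `G_μ e`. -/
noncomputable def Ecal (r n : ℕ) (μ : List ℤ) : Set (Grn r n) :=
  {e | ∀ g : Grn r n, g * e⁻¹ ∈ Gmu r n μ → len r n e ≤ len r n g}

/-- `E_μ = Σ_{e ∈ 𝓔_μ} e` in the group algebra `R G(r,1,n)`. -/
noncomputable def Emu (R : Type) [CommRing R] (r n : ℕ) (μ : List ℤ) :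
    MonoidAlgebra R (Grn r n) :=
  ∑ᶠ e ∈ Ecal r n μ, MonoidAlgebra.of R (Grn r n) e

/-- The generating set `{E_μ : μ a signed composition of n}` of the cyclotomic Solomon
algebra. -/
def SolSet (R : Type) [CommRing R] (r n : ℕ) : Set (MonoidAlgebra R (Grn r n)) :=
  {x | ∃ μ : List ℤ, IsSignedComp n μ ∧ x = Emu R r n μ}

/-- The cyclotomic Solomon algebra `Sol(G(r,1,n))`. -/
noncomputable def Sol (R : Type) [CommRing R] (r n : ℕ) :
    Subalgebra R (MonoidAlgebra R (Grn r n)) :=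
  Algebra.adjoin R (SolSet R r n)

section CosetRepresentatives

variable {G : Type*} [Group G]

def minimalInCoset (H : Subgroup G) (L : G → ℕ) : Set G :=
  {e | ∀ g, g * e⁻¹ ∈ H → L e ≤ L g}

structure IsLengthTransversal (H : Subgroup G) (L : G → ℕ) (E : Set G) : Prop where
  exists_mul_eq (g : G) : ∃ h ∈ H, ∃ e ∈ E, h * e = g
  add_le_mul {h e : G} : h ∈ H → e ∈ E → L h + L e ≤ L (h * e)
  eq_one_of_eq_zero {h : G} : h ∈ H → L h = 0 → h = 1

namespace IsLengthTransversal

variable {H : Subgroup G} {L : G → ℕ} {E : Set G}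

theorem eq_of_mul_inv_mem (hE : IsLengthTransversal H L E) {e e' : G} (he : e ∈ E)
    (he' : e' ∈ E) (h : e' * e⁻¹ ∈ H) : e' = e := by
  have h₁ := hE.add_le_mul h he
  have h₂ := hE.add_le_mul (H.inv_mem h) he'
  simp only [inv_mul_cancel_right, mul_inv_rev, inv_inv] at h₁ h₂
  exact mul_inv_eq_one.mp (hE.eq_one_of_eq_zero h (by omega))

theorem existsUnique_mem (hE : IsLengthTransversal H L E) (g : G) : ∃! e, e ∈ E ∧ e * g⁻¹ ∈ H := by
  obtain ⟨h, hh, e, he, rfl⟩ := hE.exists_mul_eq g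
  refine ⟨e, ⟨he, by simpa using H.inv_mem hh⟩, fun e' ⟨he', hg⟩ => hE.eq_of_mul_inv_mem he he' ?_⟩
  simpa [mul_assoc] using H.mul_mem hg hh

theorem minimalInCoset_eq (hE : IsLengthTransversal H L E) : minimalInCoset H L = E := by
  ext x
  refine ⟨fun hx => ?_, fun hx g hg => ?_⟩
  · obtain ⟨h, hh, e, he, rfl⟩ := hE.exists_mul_eq x
    have h₁ := hx e (by simpa using H.inv_mem hh)
    have h₂ := hE.add_le_mul hh he
    rwa [hE.eq_one_of_eq_zero hh (by omega), one_mul]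
  · have h₁ := hE.add_le_mul hg hx
    rw [inv_mul_cancel_right] at h₁
    omega

theorem existsUnique_minimal (hE : IsLengthTransversal H L E) (g : G) :
    ∃! e, e * g⁻¹ ∈ H ∧ ∀ x, x * g⁻¹ ∈ H → L e ≤ L x := by
  refine existsUnique_congr (fun e => ?_) |>.mp (hE.existsUnique_mem g)
  rw [← hE.minimalInCoset_eq, and_comm]
  refine and_congr_right fun hg => forall_congr' fun x => ?_
  rw [← H.mul_mem_cancel_right hg, mul_assoc, inv_mul_cancel_left]

end IsLengthTransversal

end CosetRepresentatives

section Inversions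

variable {n : ℕ}

lemma covBy_iff_val_eq {j k : Fin n} : j ⋖ k ↔ (k : ℕ) = j + 1 := by
  rw [Fin.covBy_iff, Nat.covBy_iff_add_one_eq, eq_comm]

lemma exists_covBy_of_not_strictMonoOn {α : Type*} [LinearOrder α] {s : Set (Fin n)}
    (hs : s.OrdConnected) {f : Fin n → α} (hf : Function.Injective f)
    (h : ¬ StrictMonoOn f s) : ∃ j k, j ⋖ k ∧ j ∈ s ∧ k ∈ s ∧ f k < f j := by
  contrapose! h
  refine strictMonoOn_of_lt_succ hs fun a ha has hsa => ?_
  exact (h a _ (Order.covBy_succ_of_not_isMax ha) has hsa).lt_of_ne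
    (hf.ne (Order.lt_succ_of_not_isMax ha).ne)

def inversions (w : Perm (Fin n)) : Finset (Fin n × Fin n) :=
  Finset.univ.filter fun p => p.1 < p.2 ∧ w p.2 < w p.1

def invCount (w : Perm (Fin n)) : ℕ := (inversions w).card

@[simp]
lemma mem_inversions {w : Perm (Fin n)} {p : Fin n × Fin n} :
    p ∈ inversions w ↔ p.1 < p.2 ∧ w p.2 < w p.1 := by
  simp [inversions]

lemma eq_one_of_strictMono {w : Perm (Fin n)} (hw : StrictMono w) : w = 1 :=
  Equiv.ext fun x => congrArg (· x) <|
    Subsingleton.elim (hw.orderIsoOfSurjective w w.surjective) (OrderIso.refl _)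

lemma invCount_eq_zero_iff {w : Perm (Fin n)} : invCount w = 0 ↔ w = 1 := by
  refine ⟨fun h => eq_one_of_strictMono fun x y hxy => ?_, ?_⟩
  · have hxy' : (x, y) ∉ inversions w := Finset.card_eq_zero.mp h ▸ Finset.notMem_empty _
    simp only [mem_inversions, not_and, not_lt] at hxy'
    exact (hxy' hxy).lt_of_ne (w.injective.ne hxy.ne)
  · rintro rfl
    simp only [invCount, Finset.card_eq_zero, Finset.eq_empty_iff_forall_notMem, mem_inversions,
      Perm.one_apply]
    exact fun p h => lt_asymm h.1 h.2

lemma swap_apply_lt_swap_apply {j k a b : Fin n} (hjk : j ⋖ k) (hab : a < b)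
    (hne : ¬(a = j ∧ b = k)) : swap j k a < swap j k b := by
  rw [covBy_iff_val_eq] at hjk
  rw [Fin.lt_def] at hab ⊢
  rw [swap_apply_def, swap_apply_def]
  split_ifs <;> simp_all [Fin.ext_iff] <;> omega

lemma invCount_swap_mul_le {j k : Fin n} (hjk : j ⋖ k) (w : Perm (Fin n)) :
    invCount (swap j k * w) ≤ invCount w + 1 := by
  refine (Finset.card_le_card fun p hp => ?_).trans (Finset.card_insert_le (w⁻¹ j, w⁻¹ k) _)
  rw [mem_inversions, Perm.mul_apply, Perm.mul_apply] at hp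
  rcases lt_or_gt_of_ne (w.injective.ne hp.1.ne) with hlt | hgt
  · have : w p.1 = j ∧ w p.2 = k := by
      by_contra hne
      exact lt_asymm hp.2 (swap_apply_lt_swap_apply hjk hlt hne)
    simp [← this.1, ← this.2]
  · exact Finset.mem_insert_of_mem (mem_inversions.mpr ⟨hp.1, hgt⟩)

lemma invCount_mul_swap_lt {j k : Fin n} (hjk : j ⋖ k) {w : Perm (Fin n)} (hd : w k < w j) :
    invCount (w * swap j k) < invCount w := by
  let φ : Fin n × Fin n ≃ Fin n × Fin n := (swap j k).prodCongr (swap j k)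
  rw [invCount, ← Finset.card_map φ.toEmbedding]
  refine Finset.card_lt_card ⟨fun q hq => ?_, fun hsub => ?_⟩
  · obtain ⟨p, hp, rfl⟩ := Finset.mem_map.mp hq
    rw [mem_inversions, Perm.mul_apply, Perm.mul_apply] at hp
    have hne : ¬(p.1 = j ∧ p.2 = k) := by
      rintro ⟨h₁, h₂⟩
      rw [h₁, h₂, swap_apply_left, swap_apply_right] at hp
      exact lt_asymm hp.2 hd
    exact mem_inversions.mpr ⟨swap_apply_lt_swap_apply hjk hp.1 hne, hp.2⟩
  · have : (j, k) ∈ inversions w := mem_inversions.mpr ⟨hjk.lt, hd⟩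
    obtain ⟨p, hp, hpq⟩ := Finset.mem_map.mp (hsub this)
    simp only [Equiv.toEmbedding_apply, φ, Equiv.prodCongr_apply, Prod.map, Prod.mk.injEq] at hpq
    rw [swap_apply_eq_iff, swap_apply_left, swap_apply_eq_iff, swap_apply_right] at hpq
    rw [mem_inversions, hpq.1, hpq.2] at hp
    exact lt_asymm hp.1 hjk.lt

end Inversions

section BlockPermutations

variable {n : ℕ} {κ : Type*} {β : Fin n → κ}

def blockPerm (β : Fin n → κ) : Subgroup (Perm (Fin n)) where
  carrier := {w | ∀ x, β (w x) = β x}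
  one_mem' _ := rfl
  mul_mem' hu hv x := (hu _).trans (hv x)
  inv_mem' {u} hu x := by simpa using (hu (u⁻¹ x)).symm

/-- The shortest representatives of the right cosets of `blockPerm β`. -/
def blockPermReps [Preorder κ] (β : Fin n → κ) : Set (Perm (Fin n)) :=
  {d | ∀ c, StrictMonoOn ⇑d⁻¹ (β ⁻¹' {c})}

lemma mem_blockPerm {w : Perm (Fin n)} : w ∈ blockPerm β ↔ ∀ x, β (w x) = β x := Iff.rfl

lemma swap_mem_blockPerm {j k : Fin n} (h : β j = β k) : swap j k ∈ blockPerm β := by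
  intro x
  rcases eq_or_ne x j with rfl | hj
  · simp [h]
  rcases eq_or_ne x k with rfl | hk
  · simp [h]
  · rw [swap_apply_of_ne_of_ne hj hk]

lemma inv_lt_inv_of_mem_blockPermReps [Preorder κ] {d : Perm (Fin n)} (hd : d ∈ blockPermReps β)
    {x y : Fin n} (hxy : x < y) (h : β x = β y) : d⁻¹ x < d⁻¹ y :=
  hd (β y) h rfl hxy

variable [PartialOrder κ]

lemma apply_lt_apply_of_mem_blockPerm (hβ : Monotone β) {w : Perm (Fin n)} (hw : w ∈ blockPerm β)
    {x y : Fin n} (h : β x < β y) : w x < w y :=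
  hβ.reflect_lt (by rwa [hw x, hw y])

lemma block_eq_of_mem_blockPerm (hβ : Monotone β) {w : Perm (Fin n)} (hw : w ∈ blockPerm β)
    {x y : Fin n} (hxy : x < y) (hinv : w y < w x) : β x = β y :=
  (hβ hxy.le).eq_of_not_lt fun h => lt_asymm hinv (apply_lt_apply_of_mem_blockPerm hβ hw h)

lemma block_lt_of_mem_blockPermReps (hβ : Monotone β) {d : Perm (Fin n)}
    (hd : d ∈ blockPermReps β) {a b : Fin n} (hab : a < b) (h : d b < d a) : β (d b) < β (d a) :=
  (hβ h.le).lt_of_ne fun he => lt_asymm hab (by simpa using inv_lt_inv_of_mem_blockPermReps hd h he)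

lemma exists_adjacent_swaps_prod_eq (hβ : Monotone β) {w : Perm (Fin n)} (hw : w ∈ blockPerm β) :
    ∃ l : List (Perm (Fin n)), (∀ σ ∈ l, ∃ j k, j ⋖ k ∧ β j = β k ∧ σ = swap j k) ∧
      l.length ≤ invCount w ∧ l.prod = w := by
  induction h : invCount w using Nat.strong_induction_on generalizing w with
  | _ m ih =>
  rcases eq_or_ne w 1 with rfl | hne
  · exact ⟨[], by simp⟩
  obtain ⟨j, k, hjk, -, -, hd⟩ := exists_covBy_of_not_strictMonoOn Set.ordConnected_univ
    w.injective fun hmono => hne (eq_one_of_strictMono (strictMonoOn_univ.mp hmono))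
  have hblock := block_eq_of_mem_blockPerm hβ hw hjk.lt hd
  obtain ⟨l, hl, hlen, hprod⟩ := ih _ (h ▸ invCount_mul_swap_lt hjk hd)
    ((blockPerm β).mul_mem hw (swap_mem_blockPerm hblock)) rfl
  refine ⟨l ++ [swap j k], ?_, ?_, by simp [hprod]⟩
  · simp only [List.mem_append, List.mem_singleton, or_imp, forall_and, forall_eq]
    exact ⟨hl, j, k, hjk, hblock, rfl⟩
  · have := invCount_mul_swap_lt hjk hd
    simp only [List.length_append, List.length_singleton]
    omega

lemma exists_blockPerm_mul_eq (hβ : Monotone β) (w : Perm (Fin n)) :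
    ∃ u ∈ blockPerm β, ∃ d ∈ blockPermReps β, u * d = w := by
  induction h : invCount w⁻¹ using Nat.strong_induction_on generalizing w with
  | _ m ih =>
  by_cases hw : w ∈ blockPermReps β
  · exact ⟨1, (blockPerm β).one_mem, w, hw, one_mul w⟩
  obtain ⟨c, hc⟩ := not_forall.mp hw
  obtain ⟨j, k, hjk, hj, hk, hd⟩ :=
    exists_covBy_of_not_strictMonoOn (Set.ordConnected_singleton.preimage_mono hβ)
      w⁻¹.injective hc
  have hblock : β j = β k := hj.trans hk.symm
  have hlt : invCount (swap j k * w)⁻¹ < m := by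
    rw [mul_inv_rev, swap_inv, ← h]
    exact invCount_mul_swap_lt hjk hd
  obtain ⟨u, hu, d, hd, hud⟩ := ih _ hlt _ rfl
  refine ⟨swap j k * u, (blockPerm β).mul_mem (swap_mem_blockPerm hblock) hu, d, hd, ?_⟩
  rw [mul_assoc, hud, ← mul_assoc, swap_mul_self, one_mul]

lemma invCount_add_le_mul (hβ : Monotone β) {u d : Perm (Fin n)} (hu : u ∈ blockPerm β)
    (hd : d ∈ blockPermReps β) : invCount u + invCount d ≤ invCount (u * d) := by
  let φ : Fin n × Fin n ≃ Fin n × Fin n := d⁻¹.prodCongr d⁻¹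
  have hsub : (inversions u).map φ.toEmbedding ∪ inversions d ⊆ inversions (u * d) := by
    intro q hq
    rcases Finset.mem_union.mp hq with hq | hq
    · obtain ⟨⟨x, y⟩, hxy, rfl⟩ := Finset.mem_map.mp hq
      obtain ⟨hxy, hinv⟩ := mem_inversions.mp hxy
      have hblock := block_eq_of_mem_blockPerm hβ hu hxy hinv
      simpa [φ] using ⟨inv_lt_inv_of_mem_blockPermReps hd hxy hblock, hinv⟩
    · obtain ⟨hab, hba⟩ := mem_inversions.mp hq
      exact mem_inversions.mpr ⟨hab, apply_lt_apply_of_mem_blockPerm hβ hu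
        (block_lt_of_mem_blockPermReps hβ hd hab hba)⟩
  have hdisj : Disjoint ((inversions u).map φ.toEmbedding) (inversions d) := by
    refine Finset.disjoint_left.mpr fun q hq hq' => ?_
    obtain ⟨⟨x, y⟩, hxy, rfl⟩ := Finset.mem_map.mp hq
    simp only [Equiv.toEmbedding_apply, φ, Equiv.prodCongr_apply, Prod.map, mem_inversions,
      Perm.coe_inv, Equiv.apply_symm_apply] at hq'
    exact lt_asymm (mem_inversions.mp hxy).1 hq'.2
  have := Finset.card_le_card hsub
  rwa [Finset.card_union_of_disjoint hdisj, Finset.card_map] at this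

lemma isLengthTransversal_blockPerm (hβ : Monotone β) :
    IsLengthTransversal (blockPerm β) invCount (blockPermReps β) where
  exists_mul_eq := exists_blockPerm_mul_eq hβ
  add_le_mul hu hd := invCount_add_le_mul hβ hu hd
  eq_one_of_eq_zero _ h := invCount_eq_zero_iff.mp h

end BlockPermutations

section Wreath

variable {r n : ℕ}

/-- The exponent vector `α` of `g = t^α w`. -/
def exponent (g : Grn r n) (j : Fin n) : ZMod r := Multiplicative.toAdd g.left j

@[simp]
lemma exponent_mul (g h : Grn r n) (j : Fin n) :
    exponent (g * h) j = exponent g j + exponent h (g.right⁻¹ j) := rfl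

@[simp]
lemma exponent_inv (g : Grn r n) (j : Fin n) : exponent g⁻¹ j = -exponent g (g.right j) := rfl

@[simp]
lemma exponent_inl (f : Fin n → ZMod r) (j : Fin n) :
    exponent (inl (Multiplicative.ofAdd f) : Grn r n) j = f j := rfl

@[simp]
lemma exponent_inr (w : Perm (Fin n)) (j : Fin n) : exponent (inr w : Grn r n) j = 0 := rfl

@[simp]
lemma exponent_tGen (i j : Fin n) :
    exponent (tGen r n i) j = (Pi.single i (1 : ZMod r) : Fin n → ZMod r) j := rfl

@[simp]
lemma exponent_one (j : Fin n) : exponent (1 : Grn r n) j = 0 := rfl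

lemma ext_exponent {g h : Grn r n} (he : exponent g = exponent h) (hr : g.right = h.right) :
    g = h :=
  SemidirectProduct.ext he hr

def tWeight (g : Grn r n) : ℕ := ∑ j, (exponent g j).val

/-- The `Π`-length, see `len_eq_weight`. -/
def weight (g : Grn r n) : ℕ := tWeight g + invCount g.right

lemma sum_val_exponent_perm (g : Grn r n) (w : Perm (Fin n)) :
    ∑ j, (exponent g (w j)).val = tWeight g :=
  Equiv.sum_comp w fun j => (exponent g j).val

lemma tWeight_mul_le (g h : Grn r n) : tWeight (g * h) ≤ tWeight g + tWeight h := by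
  rw [tWeight, tWeight, ← sum_val_exponent_perm h g.right⁻¹, ← Finset.sum_add_distrib]
  exact Finset.sum_le_sum fun j _ => ZMod.val_add_le _ _

lemma tWeight_mul_of_disjoint {g h : Grn r n}
    (hdisj : ∀ j, exponent g j = 0 ∨ exponent h (g.right⁻¹ j) = 0) :
    tWeight (g * h) = tWeight g + tWeight h := by
  rw [tWeight, tWeight, ← sum_val_exponent_perm h g.right⁻¹, ← Finset.sum_add_distrib]
  refine Finset.sum_congr rfl fun j _ => ?_
  rw [exponent_mul]
  rcases hdisj j with h0 | h0 <;> simp only [h0, zero_add, add_zero, ZMod.val_zero]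

lemma weight_mul_le_of_mem_PiSet {x : Grn r n} (hx : x ∈ PiSet r n) (g : Grn r n) :
    weight (x * g) ≤ weight g + 1 := by
  rcases hx with ⟨i, rfl⟩ | ⟨i, j, hij, rfl⟩
  · have ht : tWeight (tGen r n i) ≤ 1 := by
      rw [tWeight, Finset.sum_eq_single i (fun j _ hj => by simp [hj]) (by simp)]
      simpa [ZMod.val_one_eq_one_mod] using Nat.mod_le 1 r
    have := tWeight_mul_le (tGen r n i) g
    simp only [weight, tGen, mul_right, right_inl, one_mul] at this ht ⊢
    omega
  · have ht := tWeight_mul_le (sGen r n i j) g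
    have hinv := invCount_swap_mul_le (covBy_iff_val_eq.mpr hij) g.right
    simp only [tWeight, sGen, exponent_inr, ZMod.val_zero, Finset.sum_const_zero,
      zero_add] at ht
    simp only [weight, tWeight, sGen, mul_right, right_inr]
    omega

lemma weight_prod_le {l : List (Grn r n)} (hl : ∀ x ∈ l, x ∈ PiSet r n) :
    weight l.prod ≤ l.length := by
  induction l with
  | nil => simp [weight, tWeight, invCount_eq_zero_iff.mpr]
  | cons x l ih =>
    simp only [List.forall_mem_cons] at hl
    simpa using (weight_mul_le_of_mem_PiSet hl.1 _).trans (Nat.add_le_add_right (ih hl.2) 1)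

lemma eq_one_of_weight_eq_zero {g : Grn r n} (hg : weight g = 0) : g = 1 := by
  simp only [weight, tWeight, Nat.add_eq_zero_iff, Finset.sum_eq_zero_iff, Finset.mem_univ,
    true_implies, ZMod.val_eq_zero, invCount_eq_zero_iff] at hg
  exact ext_exponent (funext hg.1) hg.2

lemma ofAdd_eq_prod_pow [NeZero r] (f : Fin n → ZMod r) :
    Multiplicative.ofAdd f = ∏ j, Multiplicative.ofAdd (Pi.single j (1 : ZMod r)) ^ (f j).val := by
  conv_lhs => rw [← Finset.univ_sum_single f]
  simp only [ofAdd_sum, ← ofAdd_nsmul, ← Pi.single_smul, nsmul_one, ZMod.natCast_zmod_val]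

lemma inl_mem_of_tGen_mem [NeZero r] {K : Subgroup (Grn r n)} {f : Fin n → ZMod r}
    (h : ∀ j, f j ≠ 0 → tGen r n j ∈ K) : inl (Multiplicative.ofAdd f) ∈ K := by
  change _ ∈ K.comap inl
  rw [ofAdd_eq_prod_pow]
  refine Subgroup.prod_mem _ fun j _ => ?_
  by_cases hj : f j = 0
  · simp [hj]
  · change inl (_ ^ _) ∈ K
    rw [map_pow]
    exact K.pow_mem (h j hj) _

end Wreath

section Length

variable {r n : ℕ}

lemma inl_eq_list_prod [NeZero r] (f : Fin n → ZMod r) :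
    (inl (Multiplicative.ofAdd f) : Grn r n) =
      ((List.finRange n).map fun j => tGen r n j ^ (f j).val).prod := by
  rw [ofAdd_eq_prod_pow, Fin.prod_univ_def, map_list_prod, List.map_map]
  simp only [Function.comp_def, map_pow, tGen]

lemma exists_word [NeZero r] (g : Grn r n) :
    ∃ l : List (Grn r n), (∀ x ∈ l, x ∈ PiSet r n) ∧ l.length ≤ weight g ∧ l.prod = g := by
  -- every permutation preserves the blocks of a constant map
  obtain ⟨sWord, hs, hlen, hprod⟩ :=
    exists_adjacent_swaps_prod_eq (β := fun _ : Fin n => ()) monotone_const (w := g.right)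
      fun _ => rfl
  let tWord :=
    ((List.finRange n).map fun j => List.replicate (exponent g j).val (tGen r n j)).flatten
  refine ⟨tWord ++ sWord.map inr, fun x hx => ?_, ?_, ?_⟩
  · simp only [tWord, List.mem_append, List.mem_flatten, List.mem_map, List.mem_finRange,
      true_and] at hx
    rcases hx with ⟨-, ⟨j, -, rfl⟩, hx⟩ | ⟨σ, hσ, rfl⟩
    · exact Or.inl ⟨j, List.eq_of_mem_replicate hx⟩
    · obtain ⟨j, k, hjk, -, rfl⟩ := hs σ hσ
      exact Or.inr ⟨j, k, covBy_iff_val_eq.mp hjk, rfl⟩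
  · simp only [tWord, List.length_append, List.length_flatten, List.map_map, Function.comp_def,
      List.length_replicate, ← Fin.sum_univ_def, List.length_map, weight, tWeight]
    omega
  · rw [List.prod_append, List.prod_flatten, List.map_map, ← map_list_prod, hprod]
    simp only [Function.comp_def, List.prod_replicate]
    rw [← inl_eq_list_prod]
    exact inl_left_mul_inr_right g

lemma len_eq_weight [NeZero r] (g : Grn r n) : len r n g = weight g := by
  obtain ⟨l, hl, hlen, hprod⟩ := exists_word g
  have hmem : l.length ∈ {k | ∃ l : List (Grn r n), l.length = k ∧ (∀ x ∈ l, x ∈ PiSet r n) ∧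
      l.prod = g} := ⟨l, rfl, hl, hprod⟩
  refine le_antisymm ((Nat.sInf_le hmem).trans hlen) ?_
  obtain ⟨l', hlen', hl', hprod'⟩ := Nat.sInf_mem ⟨_, hmem⟩
  rw [len, ← hlen', ← hprod']
  exact weight_prod_le hl'

end Length

section BlockSubgroup

variable {r n : ℕ} {κ : Type*} {β : Fin n → κ} {Q : Set κ}

/-- `T_P ⋊ blockPerm β`, where `P = β ⁻¹' Q` is the set of positions in blocks labelled by `Q`. -/
def blockSubgroup (β : Fin n → κ) (Q : Set κ) : Subgroup (Grn r n) where
  carrier := {g | (∀ j, β j ∉ Q → exponent g j = 0) ∧ g.right ∈ blockPerm β}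
  one_mem' := ⟨fun _ _ => rfl, (blockPerm β).one_mem⟩
  mul_mem' := by
    rintro g h ⟨hg, hgr⟩ ⟨hh, hhr⟩
    refine ⟨fun j hj => ?_, (blockPerm β).mul_mem hgr hhr⟩
    have hj' : β (g.right⁻¹ j) ∉ Q := by rwa [mem_blockPerm.mp ((blockPerm β).inv_mem hgr)]
    rw [exponent_mul, hg j hj, hh _ hj', add_zero]
  inv_mem' := by
    rintro g ⟨hg, hgr⟩
    refine ⟨fun j hj => ?_, (blockPerm β).inv_mem hgr⟩
    rw [exponent_inv, hg _ (by rwa [mem_blockPerm.mp hgr]), neg_zero]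

lemma mem_blockSubgroup {g : Grn r n} :
    g ∈ blockSubgroup β Q ↔ (∀ j, β j ∉ Q → exponent g j = 0) ∧ g.right ∈ blockPerm β :=
  Iff.rfl

lemma tGen_mem_blockSubgroup_iff [Nontrivial (ZMod r)] {j : Fin n} :
    tGen r n j ∈ blockSubgroup β Q ↔ β j ∈ Q := by
  refine ⟨fun h => by_contra fun hj => (one_ne_zero : (1 : ZMod r) ≠ 0) (by simpa using h.1 j hj),
    fun hj => ⟨fun i hi => ?_, (blockPerm β).one_mem⟩⟩
  have : i ≠ j := by
    rintro rfl
    exact hi hj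
  simp [this]

def blockSubgroupReps [Preorder κ] (β : Fin n → κ) (Q : Set κ) : Set (Grn r n) :=
  {e | (∀ j, β j ∈ Q → exponent e j = 0) ∧ e.right ∈ blockPermReps β}

variable [PartialOrder κ]

lemma exists_blockSubgroup_mul_eq (hβ : Monotone β) (g : Grn r n) :
    ∃ h ∈ blockSubgroup β Q, ∃ e ∈ blockSubgroupReps β Q, h * e = g := by
  obtain ⟨u, hu, d, hd, hud⟩ := exists_blockPerm_mul_eq hβ g.right
  let h : Grn r n := inl (Multiplicative.ofAdd ((β ⁻¹' Q).indicator (exponent g))) * inr u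
  refine ⟨h, ⟨fun j hj => by simp [h, hj], by simpa [h] using hu⟩, h⁻¹ * g,
    ⟨fun j hj => ?_, by simpa [h, ← hud] using hd⟩, mul_inv_cancel_left h g⟩
  have hj' : u j ∈ β ⁻¹' Q := by rwa [Set.mem_preimage, mem_blockPerm.mp hu]
  simp [h, hj']

lemma weight_add_le_mul (hβ : Monotone β) {h e : Grn r n} (hh : h ∈ blockSubgroup β Q)
    (he : e ∈ blockSubgroupReps β Q) : weight h + weight e ≤ weight (h * e) := by
  have ht : tWeight (h * e) = tWeight h + tWeight e := tWeight_mul_of_disjoint fun j => by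
    by_cases hj : β j ∈ Q
    · exact Or.inr (he.1 _ (by rwa [mem_blockPerm.mp ((blockPerm β).inv_mem hh.2)]))
    · exact Or.inl (hh.1 j hj)
  have := invCount_add_le_mul hβ hh.2 he.2
  simp only [weight, ht, mul_right]
  omega

lemma isLengthTransversal_blockSubgroup (hβ : Monotone β) :
    IsLengthTransversal (blockSubgroup β Q) weight (blockSubgroupReps (r := r) β Q) where
  exists_mul_eq := exists_blockSubgroup_mul_eq hβ
  add_le_mul := weight_add_le_mul hβ
  eq_one_of_eq_zero _ := eq_one_of_weight_eq_zero

end BlockSubgroup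

section NegTorus

variable {r n : ℕ} {κ : Type*} {β : Fin n → κ} {Q : Set κ}

/-- `T_{-P}`: the torus elements supported off `P = β ⁻¹' Q`. -/
def negTorus (β : Fin n → κ) (Q : Set κ) : Subgroup (Grn r n) :=
  blockSubgroup β Qᶜ ⊓ rightHom.ker

lemma mem_negTorus {t : Grn r n} :
    t ∈ negTorus β Q ↔ t.right = 1 ∧ ∀ j, β j ∈ Q → exponent t j = 0 := by
  simp only [negTorus, Subgroup.mem_inf, mem_blockSubgroup, MonoidHom.mem_ker, rightHom_eq_right,
    Set.mem_compl_iff, not_not]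
  exact ⟨fun h => ⟨h.2, h.1.1⟩, fun h => ⟨⟨h.2, h.1 ▸ (blockPerm β).one_mem⟩, h.1⟩⟩

lemma bijOn_mul_inr [Preorder κ] :
    Set.BijOn (fun p : Grn r n × Perm (Fin n) => p.1 * inr p.2)
      ((negTorus (r := r) β Q : Set (Grn r n)) ×ˢ blockPermReps β) (blockSubgroupReps β Q) := by
  refine ⟨?_, ?_, fun e he => ?_⟩
  · rintro ⟨t, d⟩ ⟨ht, hd⟩
    obtain ⟨ht₁, ht₂⟩ := mem_negTorus.mp ht
    dsimp only at ht₁ ht₂ hd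
    exact ⟨fun j hj => by simp [ht₂ j hj], by simpa [ht₁] using hd⟩
  · rintro ⟨t, d⟩ ⟨ht, -⟩ ⟨t', d'⟩ ⟨ht', -⟩ heq
    have ht₁ : t.right = 1 := (mem_negTorus.mp ht).1
    have ht₁' : t'.right = 1 := (mem_negTorus.mp ht').1
    have hd : d = d' := by simpa [ht₁, ht₁'] using congrArg SemidirectProduct.right heq
    subst hd
    simpa using mul_right_cancel heq
  · exact ⟨(inl e.left, e.right), ⟨mem_negTorus.mpr ⟨rfl, he.1⟩, he.2⟩,
      inl_left_mul_inr_right e⟩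

end NegTorus

section SignedComposition

variable {r n : ℕ} {μ : List ℤ}

/-- The index `i` of the block `μ̄_i ≤ j < μ̄_{i+1}` containing position `j`. -/
noncomputable def blk (μ : List ℤ) (j : Fin n) : ℕ := sInf {i | (j : ℕ) < absPrefix μ (i + 1)}

def posBlocks (μ : List ℤ) : Set ℕ := {i | 0 < μ.getD i 0}

lemma absPrefix_mono (μ : List ℤ) : Monotone (absPrefix μ) := fun _ _ h =>
  ((List.take_prefix_take_left h).sublist.map Int.natAbs).sum_le_sum fun _ _ => Nat.zero_le _

lemma absPrefix_blk_le (μ : List ℤ) (j : Fin n) : absPrefix μ (blk μ j) ≤ j := by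
  cases h : blk μ j with
  | zero => simp [absPrefix]
  | succ k =>
    have : k ∉ {i | (j : ℕ) < absPrefix μ (i + 1)} :=
      Nat.notMem_of_lt_sInf (show k < blk μ j by omega)
    simpa using this

lemma lt_absPrefix_blk_succ (hμ : (μ.map Int.natAbs).sum = n) (j : Fin n) :
    (j : ℕ) < absPrefix μ (blk μ j + 1) := by
  refine Nat.sInf_mem (s := {i | (j : ℕ) < absPrefix μ (i + 1)}) ⟨μ.length, ?_⟩
  show (j : ℕ) < absPrefix μ (μ.length + 1)
  rw [absPrefix, List.take_of_length_le (by omega), hμ]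
  exact j.isLt

lemma blk_eq {i : ℕ} {j : Fin n} (h₁ : absPrefix μ i ≤ j) (h₂ : (j : ℕ) < absPrefix μ (i + 1)) :
    blk μ j = i := by
  refine le_antisymm (Nat.sInf_le h₂) (not_lt.mp fun hlt => ?_)
  have hmem : (j : ℕ) < absPrefix μ (blk μ j + 1) :=
    Nat.sInf_mem (s := {i | (j : ℕ) < absPrefix μ (i + 1)}) ⟨i, h₂⟩
  have := absPrefix_mono μ (show blk μ j + 1 ≤ i by omega)
  omega

lemma blk_lt_length (hμ : (μ.map Int.natAbs).sum = n) (j : Fin n) : blk μ j < μ.length := by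
  by_contra! h
  have := absPrefix_blk_le μ j
  rw [absPrefix, List.take_of_length_le h, hμ] at this
  exact absurd j.isLt (not_lt.mpr this)

lemma monotone_blk (hμ : (μ.map Int.natAbs).sum = n) : Monotone (blk (n := n) μ) :=
  fun j j' h => Nat.sInf_le (show (j : ℕ) < absPrefix μ (blk μ j' + 1) from
    lt_of_le_of_lt h (lt_absPrefix_blk_succ hμ j'))

lemma tGen_mem_PiMu (hμ : (μ.map Int.natAbs).sum = n) {j : Fin n} (hj : blk μ j ∈ posBlocks μ) :
    tGen r n j ∈ PiMu r n μ :=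
  Or.inl ⟨j, ⟨blk μ j, blk_lt_length hμ j, hj, absPrefix_blk_le μ j,
    lt_absPrefix_blk_succ hμ j⟩, rfl⟩

lemma sGen_mem_PiMu (hμ : (μ.map Int.natAbs).sum = n) {j k : Fin n} (hjk : (k : ℕ) = j + 1)
    (h : blk μ j = blk μ k) : sGen r n j k ∈ PiMu r n μ :=
  Or.inr ⟨j, k, hjk, ⟨blk μ j, blk_lt_length hμ j, absPrefix_blk_le μ j,
    h ▸ lt_absPrefix_blk_succ hμ k⟩, rfl⟩

lemma PiMu_subset_blockSubgroup :
    PiMu r n μ ⊆ (blockSubgroup (r := r) (n := n) (blk μ) (posBlocks μ) : Set (Grn r n)) := by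
  rintro x (⟨j, ⟨i, -, hi, h₁, h₂⟩, rfl⟩ | ⟨j, k, hjk, ⟨i, -, h₁, h₂⟩, rfl⟩)
  · refine ⟨fun j' hj' => ?_, (blockPerm _).one_mem⟩
    have : j' ≠ j := by
      rintro rfl
      exact hj' ((blk_eq h₁ h₂).symm ▸ hi)
    simp [this]
  · refine ⟨fun _ _ => rfl, swap_mem_blockPerm ?_⟩
    rw [blk_eq h₁ (by omega), blk_eq (by omega) h₂]

end SignedComposition

section Identification

variable {r n : ℕ} {μ : List ℤ}

lemma Gmu_eq_blockSubgroup [NeZero r] (hμ : (μ.map Int.natAbs).sum = n) :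
    Gmu r n μ = blockSubgroup (blk μ) (posBlocks μ) := by
  refine le_antisymm ((Subgroup.closure_le _).mpr PiMu_subset_blockSubgroup) fun g hg => ?_
  rw [← inl_left_mul_inr_right g]
  refine mul_mem (inl_mem_of_tGen_mem (f := exponent g) fun j hj => ?_) ?_
  · exact Subgroup.subset_closure (tGen_mem_PiMu hμ (not_not.mp fun hQ => hj (hg.1 j hQ)))
  · obtain ⟨l, hl, -, hprod⟩ := exists_adjacent_swaps_prod_eq (monotone_blk hμ) hg.2
    rw [← hprod, map_list_prod]
    refine Subgroup.list_prod_mem _ fun x hx => ?_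
    obtain ⟨σ, hσ, rfl⟩ := List.mem_map.mp hx
    obtain ⟨j, k, hjk, hb, rfl⟩ := hl σ hσ
    exact Subgroup.subset_closure (sGen_mem_PiMu hμ (covBy_iff_val_eq.mp hjk) hb)

lemma isLengthTransversal_Gmu [NeZero r] (hμ : (μ.map Int.natAbs).sum = n) :
    IsLengthTransversal (Gmu r n μ) (len r n) (blockSubgroupReps (blk μ) (posBlocks μ)) := by
  rw [Gmu_eq_blockSubgroup hμ, funext len_eq_weight]
  exact isLengthTransversal_blockSubgroup (monotone_blk hμ)

lemma Dset_eq_blockPermReps [NeZero r] (hμ : (μ.map Int.natAbs).sum = n) :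
    Dset r n μ = blockPermReps (blk μ) := by
  have hS : youngS r n μ = blockPerm (blk μ) := by
    ext w
    simp [youngS, Gmu_eq_blockSubgroup hμ, mem_blockSubgroup]
  have hL : (fun w => len r n (inr w)) = invCount := by
    funext w
    simp [len_eq_weight, weight, tWeight]
  change minimalInCoset (youngS r n μ) (fun w => len r n (inr w)) = _
  rw [hS, hL]
  exact (isLengthTransversal_blockPerm (monotone_blk hμ)).minimalInCoset_eq

lemma Tneg_eq_negTorus [NeZero r] [Nontrivial (ZMod r)] (hμ : (μ.map Int.natAbs).sum = n) :
    Tneg r n μ = negTorus (blk μ) (posBlocks μ) := by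
  refine le_antisymm ((Subgroup.closure_le _).mpr ?_) fun t ht => ?_
  · rintro _ ⟨i, hi, rfl⟩
    rw [Gmu_eq_blockSubgroup hμ, tGen_mem_blockSubgroup_iff] at hi
    refine mem_negTorus.mpr ⟨rfl, fun j hj => ?_⟩
    have : j ≠ i := by
      rintro rfl
      exact hi hj
    simp [this]
  · obtain ⟨ht₁, ht₂⟩ := mem_negTorus.mp ht
    rw [← inl_left_mul_inr_right t, ht₁, map_one, mul_one]
    refine inl_mem_of_tGen_mem (f := exponent t) fun j hj => Subgroup.subset_closure ⟨j, ?_, rfl⟩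
    rw [Gmu_eq_blockSubgroup hμ, tGen_mem_blockSubgroup_iff]
    exact fun hQ => hj (ht₂ j hQ)

end Identification

theorem stmt3_general (r n : ℕ) (hr : 2 ≤ r) (μ : List ℤ) (hμ : IsSignedComp n μ) :
    Set.BijOn (fun p : Grn r n × Equiv.Perm (Fin n) => p.1 * inr p.2)
      ((Tneg r n μ : Set (Grn r n)) ×ˢ Dset r n μ) (Ecal r n μ) ∧
    (∀ g : Grn r n, ∃! e : Grn r n, e ∈ Ecal r n μ ∧ e * g⁻¹ ∈ Gmu r n μ) ∧
    (∀ g : Grn r n, ∃! e : Grn r n, e * g⁻¹ ∈ Gmu r n μ ∧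
        ∀ h : Grn r n, h * g⁻¹ ∈ Gmu r n μ → len r n e ≤ len r n h) := by
  have : Fact (1 < r) := ⟨hr⟩
  have : NeZero r := ⟨by omega⟩
  have hE := isLengthTransversal_Gmu (r := r) hμ.2
  have hEcal : Ecal r n μ = blockSubgroupReps (blk μ) (posBlocks μ) := hE.minimalInCoset_eq
  rw [hEcal, Dset_eq_blockPermReps hμ.2, Tneg_eq_negTorus hμ.2]
  exact ⟨bijOn_mul_inr, hE.existsUnique_mem, hE.existsUnique_minimal⟩

theorem stmt3 (r n : ℕ) (hr : 2 ≤ r) (hn : 1 ≤ n) (μ : List ℤ) (hμ : IsSignedComp n μ) :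
    Set.BijOn (fun p : Grn r n × Equiv.Perm (Fin n) => p.1 * inr p.2)
      ((Tneg r n μ : Set (Grn r n)) ×ˢ Dset r n μ) (Ecal r n μ) ∧
    (∀ g : Grn r n, ∃! e : Grn r n, e ∈ Ecal r n μ ∧ e * g⁻¹ ∈ Gmu r n μ) ∧
    (∀ g : Grn r n, ∃! e : Grn r n, e * g⁻¹ ∈ Gmu r n μ ∧
        ∀ h : Grn r n, h * g⁻¹ ∈ Gmu r n μ → len r n e ≤ len r n h) :=
  stmt3_general r n hr μ hμ

end CycSol
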